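/- The quantifier axiom A7 is semantically valid: for any nonempty set M and functions F, G : M → [0,1], ( (sup G) ∸ (sup F) ) ∸ sup_{x∈M} (G(x) ∸ F(x)) = 0, where sup denotes supremum over M and a ∸ b := max(a − b, 0). -/
import Mathlib

theorem quantifier_axiom_A7_valid {M : Type*} [Nonempty M]
    (F G : M → ℝ)
    (hF : ∀ x, F x ∈ Set.Icc (0:ℝ) 1) (hG : ∀ x, G x ∈ Set.Icc (0:ℝ) 1) :
    max (max ((⨆ x, G x) - (⨆ x, F x)) 0 - (⨆ x, max (G x - F x) 0)) 0 = 0 := by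
  have hFbdd : BddAbove (Set.range F) := ⟨1, by rintro _ ⟨x, rfl⟩; exact (hF x).2⟩
  have hMbdd : BddAbove (Set.range fun x => max (G x - F x) 0) :=
    ⟨1, by rintro _ ⟨x, rfl⟩; exact max_le (by linarith [(hG x).2, (hF x).1]) one_pos.le⟩
  have hS0 : 0 ≤ ⨆ x, max (G x - F x) 0 := by
    obtain ⟨a⟩ := ‹Nonempty M›
    exact le_trans (le_max_right _ _) (le_ciSup hMbdd a)
  have hG_le : (⨆ x, G x) ≤ (⨆ x, F x) + ⨆ x, max (G x - F x) 0 := by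
    apply ciSup_le
    intro x
    have h1 : F x ≤ ⨆ x, F x := le_ciSup hFbdd x
    have h2 : max (G x - F x) 0 ≤ ⨆ x, max (G x - F x) 0 := le_ciSup hMbdd x
    have h3 : G x - F x ≤ max (G x - F x) 0 := le_max_left _ _
    linarith
  have : max ((⨆ x, G x) - (⨆ x, F x)) 0 ≤ ⨆ x, max (G x - F x) 0 :=
    max_le (by linarith) hS0
  simp [max_eq_right, sub_nonpos.mpr this]
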